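/- Let d ≥ 2 and n ≥ 2 be integers and N = n^d. Define η : ℝ^d → ℝ^d by η(x)_j = x_j for j = 1,…,d−1 and η(x)_d = x_d + ∑_{j=1}^{d−1} n^{−j}·max(0, x_j). Then: (i) η is a bijection, with inverse given by η^{−1}(y)_j = y_j for j < d and η^{−1}(y)_d = y_d − ∑_{j=1}^{d−1} n^{−j}·max(0, y_j); (ii) both η and η^{−1} are Lipschitz with constant n/(n−1) in the Euclidean norm; (iii) for the grid points x^α = α/n, α ∈ {0,…,n−1}^d, the set of values {η(x^α)_d} equals {i/N : i = 0,…,N−1}, so these values are pairwise distinct with minimal pairwise distance exactly N^{−1}. -/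

import Mathlib

open scoped NNReal

/-- The uniform grid point `x^α = α/n` of `[0,1]^d`. -/
noncomputable def gridPoint (d n : ℕ) (α : Fin d → Fin n) : EuclideanSpace ℝ (Fin d) :=
  WithLp.toLp 2 fun i => (α i : ℝ) / n

/-!
The last coordinate of `η` is shifted by `s(x) = ∑_{k < d-1} n^{-(k+1)} σ(x_k)`, which does not
depend on `x_{d-1}`; hence `η` is the shear `x ↦ x + s(x) e` along the last basis vector `e`, with
inverse `y ↦ y - s(y) e`. Since `σ` and the coordinates are `1`-Lipschitz, `s` is Lipschitz with
constant `∑_k n^{-(k+1)} ≤ 1/(n-1)`, so both shears are `1 + 1/(n-1) = n/(n-1)`-Lipschitz.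

On the grid, `N · η(x^α)_{d-1} = α_{d-1} n^{d-1} + ∑_{k < d-1} α_k n^{d-2-k}` is the base-`n`
number whose digits are those of `α` with the first `d-1` of them reversed, so
`α ↦ N · η(x^α)_{d-1}` is a bijection onto `{0, …, N-1}`.
-/

open Finset Function

section Shear

variable {E : Type*} [AddCommGroup E] [Module ℝ E] {v : E} {s : E → ℝ}

theorem leftInverse_sub_smul_add_smul (hs : ∀ x (t : ℝ), s (x + t • v) = s x) :
    LeftInverse (fun y => y - s y • v) (fun x => x + s x • v) := fun x => by
  simp [hs]

theorem rightInverse_sub_smul_add_smul (hs : ∀ x (t : ℝ), s (x + t • v) = s x) :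
    RightInverse (fun y => y - s y • v) (fun x => x + s x • v) := fun y => by
  dsimp only
  rw [sub_eq_add_neg, ← neg_smul, hs, neg_smul, neg_add_cancel_right]

end Shear

theorem LipschitzWith.smul_const {X : Type*} [PseudoMetricSpace X] {s : X → ℝ} {K : ℝ≥0}
    (hs : LipschitzWith K s) {F : Type*} [SeminormedAddCommGroup F] [NormedSpace ℝ F] (v : F) :
    LipschitzWith (K * ‖v‖₊) fun x => s x • v :=
  LipschitzWith.of_dist_le_mul fun x y => by
    rw [dist_eq_norm, ← sub_smul, norm_smul, NNReal.coe_mul, coe_nnnorm, mul_right_comm]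
    gcongr
    exact hs.dist_le_mul x y

theorem lipschitzWith_sum_mul_relu {ι : Type*} [Fintype ι] (c : ι → ℝ≥0) :
    LipschitzWith (∑ i, c i) fun x : EuclideanSpace ℝ ι => ∑ i, (c i : ℝ) * max 0 (x i) :=
  LipschitzWith.of_dist_le_mul fun x y => by
    rw [Real.dist_eq, ← sum_sub_distrib, NNReal.coe_sum, sum_mul]
    refine (abs_sum_le_sum_abs _ _).trans (sum_le_sum fun i _ => ?_)
    rw [← mul_sub, abs_mul, NNReal.abs_eq]
    gcongr
    rw [max_comm 0 (x i), max_comm 0 (y i)]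
    exact (abs_max_sub_max_le_abs _ _ _).trans (PiLp.dist_apply_le x y i)

section EquivFin

variable {α : Type*} {N : ℕ} (e : α ≃ Fin N)

theorem range_natCast_equiv_div :
    Set.range (fun a => ((e a : ℕ) : ℝ) / N) = {x : ℝ | ∃ i : ℕ, i < N ∧ x = (i : ℝ) / N} := by
  ext x
  constructor
  · rintro ⟨a, rfl⟩
    exact ⟨e a, (e a).isLt, rfl⟩
  · rintro ⟨i, hi, rfl⟩
    exact ⟨e.symm ⟨i, hi⟩, by simp⟩

theorem injective_natCast_equiv_div : Injective fun a => ((e a : ℕ) : ℝ) / N := by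
  intro a b h
  have hN : (N : ℝ) ≠ 0 := Nat.cast_ne_zero.2 (e a).pos.ne'
  exact e.injective (Fin.ext (by exact_mod_cast (div_left_inj' hN).1 h))

theorem one_div_le_abs_natCast_equiv_div_sub {a b : α} (hab : a ≠ b) :
    1 / (N : ℝ) ≤ |((e a : ℕ) : ℝ) / N - ((e b : ℕ) : ℝ) / N| := by
  have h : (1 : ℤ) ≤ |((e a : ℕ) : ℤ) - (e b : ℕ)| :=
    Int.one_le_abs (sub_ne_zero.2 (by simpa [Fin.val_inj] using e.injective.ne hab))
  rw [← sub_div, abs_div, Nat.abs_cast]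
  gcongr
  exact_mod_cast h

theorem exists_ne_abs_natCast_equiv_div_sub_eq (hN : 1 < N) :
    ∃ a b, a ≠ b ∧ |((e a : ℕ) : ℝ) / N - ((e b : ℕ) : ℝ) / N| = 1 / N := by
  refine ⟨e.symm ⟨1, hN⟩, e.symm ⟨0, by omega⟩, by simp, ?_⟩
  simp

end EquivFin

def revInit (d : ℕ) : Equiv.Perm (Fin d) :=
  Involutive.toPerm (fun j => if (j : ℕ) = d - 1 then j else ⟨d - 2 - j, by omega⟩) fun j => by
    by_cases h : (j : ℕ) = d - 1
    · simp [h]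
    · have h' : d - 2 - (j : ℕ) ≠ d - 1 := by omega
      simp only [h, h', if_false, Fin.ext_iff]
      omega

theorem revInit_apply_of_eq {d : ℕ} {j : Fin d} (h : (j : ℕ) = d - 1) : revInit d j = j :=
  if_pos h

theorem revInit_apply_of_lt {d : ℕ} {j : Fin d} (h : (j : ℕ) < d - 1) :
    (revInit d j : ℕ) = d - 2 - j :=
  congrArg Fin.val (if_neg h.ne)

def gridIndex (d n : ℕ) : (Fin d → Fin n) ≃ Fin (n ^ d) :=
  ((revInit d).arrowCongr (Equiv.refl _)).trans finFunctionFinEquiv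

theorem gridIndex_val (d n : ℕ) (α : Fin d → Fin n) :
    (gridIndex d n α : ℕ) = ∑ k, (α k : ℕ) * n ^ (revInit d k : ℕ) := by
  rw [gridIndex, Equiv.trans_apply, finFunctionFinEquiv_apply,
    ← Equiv.sum_comp (revInit d)]
  simp

noncomputable def couplingWeight (d n : ℕ) (k : Fin d) : ℝ≥0 :=
  if (k : ℕ) < d - 1 then (n : ℝ≥0)⁻¹ ^ ((k : ℕ) + 1) else 0

noncomputable def couplingShift (d n : ℕ) (x : EuclideanSpace ℝ (Fin d)) : ℝ :=
  ∑ k, (couplingWeight d n k : ℝ) * max 0 (x k)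

theorem couplingShift_eq (d n : ℕ) (x : EuclideanSpace ℝ (Fin d)) :
    couplingShift d n x = ∑ k : Fin d, (if (k : ℕ) < d - 1
      then (n : ℝ) ^ (-((k : ℕ) : ℤ) - 1) * max 0 (x k) else 0) := by
  refine sum_congr rfl fun k _ => ?_
  have hpow : (n : ℝ) ^ (-((k : ℕ) : ℤ) - 1) = (n : ℝ)⁻¹ ^ ((k : ℕ) + 1) := by
    rw [← zpow_natCast, inv_zpow']
    push_cast
    ring_nf
  split_ifs <;> simp [couplingWeight, *]

theorem couplingShift_add_smul_single {d : ℕ} (n : ℕ) {j : Fin d} (hj : (j : ℕ) = d - 1)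
    (x : EuclideanSpace ℝ (Fin d)) (t : ℝ) :
    couplingShift d n (x + t • EuclideanSpace.single j 1) = couplingShift d n x := by
  refine sum_congr rfl fun k _ => ?_
  by_cases hk : k = j
  · simp [couplingWeight, hk, hj]
  · simp [hk]

theorem sum_couplingWeight_le {n : ℕ} (hn : 1 < n) (d : ℕ) :
    ((∑ k, couplingWeight d n k : ℝ≥0) : ℝ) ≤ 1 / ((n : ℝ) - 1) := by
  have hn' : (1 : ℝ) < n := by exact_mod_cast hn
  calc ((∑ k, couplingWeight d n k : ℝ≥0) : ℝ)
      ≤ ∑ k : Fin d, (n : ℝ)⁻¹ ^ ((k : ℕ) + 1) := by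
        push_cast
        refine sum_le_sum fun k _ => ?_
        unfold couplingWeight
        split_ifs <;> simp
    _ = (n : ℝ)⁻¹ * ∑ k ∈ range d, (n : ℝ)⁻¹ ^ k := by
        rw [Fin.sum_univ_eq_sum_range (fun k => (n : ℝ)⁻¹ ^ (k + 1)), mul_sum]
        simp only [pow_succ']
    _ ≤ (n : ℝ)⁻¹ * (1 / (1 - (n : ℝ)⁻¹)) := by
        gcongr
        simpa using geom_sum_Ico_le_of_lt_one (m := 0) (n := d)
          (by positivity : (0 : ℝ) ≤ (n : ℝ)⁻¹) (inv_lt_one_of_one_lt₀ hn')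
    _ = 1 / ((n : ℝ) - 1) := by
        field_simp

theorem gridPoint_apply (d n : ℕ) (α : Fin d → Fin n) (i : Fin d) :
    gridPoint d n α i = (α i : ℝ) / n :=
  rfl

theorem gridPoint_add_couplingShift {d : ℕ} (n : ℕ) {j : Fin d} (hj : (j : ℕ) = d - 1)
    (α : Fin d → Fin n) :
    gridPoint d n α j + couplingShift d n (gridPoint d n α) = (gridIndex d n α : ℝ) / n ^ d := by
  have hn : (n : ℝ) ≠ 0 := Nat.cast_ne_zero.2 (α j).pos.ne'
  have hlast : gridPoint d n α j = ∑ k, if k = j then (α k : ℝ) / n else 0 := by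
    simp [gridPoint_apply]
  rw [hlast, couplingShift, ← sum_add_distrib, gridIndex_val]
  simp only [gridPoint_apply]
  push_cast
  rw [sum_div]
  refine sum_congr rfl fun k _ => ?_
  by_cases hk : k = j
  · subst hk
    have hpow : (n : ℝ) ^ d = n ^ (d - 1) * n := by
      rw [← pow_succ]
      congr 1
      omega
    simp only [if_true, couplingWeight, hj, lt_irrefl, if_false, revInit_apply_of_eq hj,
      NNReal.coe_zero, zero_mul, add_zero]
    rw [hpow]
    field_simp
  · have hk' : (k : ℕ) < d - 1 := by
      have := k.isLt
      have : (k : ℕ) ≠ j := fun h => hk (Fin.ext h)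
      omega
    have hpow : (n : ℝ) ^ d = n ^ (d - 2 - k) * n ^ ((k : ℕ) + 1) * n := by
      rw [← pow_add, ← pow_succ]
      congr 1
      omega
    simp only [hk, if_false, couplingWeight, hk', if_true, revInit_apply_of_lt hk',
      zero_add]
    rw [max_eq_right (by positivity), hpow]
    push_cast
    rw [inv_pow]
    field_simp

theorem one_add_sum_couplingWeight_le {n : ℕ} (hn : 1 < n) (d : ℕ) :
    1 + ∑ k, couplingWeight d n k ≤ Real.toNNReal (n / (n - 1)) := by
  have hn' : (1 : ℝ) < n := by exact_mod_cast hn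
  rw [Real.le_toNNReal_iff_coe_le (div_nonneg (by linarith) (by linarith)), NNReal.coe_add,
    NNReal.coe_one]
  calc 1 + ((∑ k, couplingWeight d n k : ℝ≥0) : ℝ) ≤ 1 + 1 / ((n : ℝ) - 1) := by
        gcongr
        exact sum_couplingWeight_le hn d
    _ = n / (n - 1) := by
        field_simp [(sub_pos.2 hn').ne']
        ring

/-- Lemma 2.3 of the paper: the coupling layer
`η(x)_j = x_j` for `j < d`, `η(x)_d = x_d + ∑_{j=1}^{d−1} n^{−j} σ(x_j)` (with `σ = ReLU`)
is a bijection with explicit inverse, `η` and `η^{−1}` are `n/(n−1)`-Lipschitz, and the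
last coordinates of the perturbed grid points are exactly `{i/N : i < N}`, hence pairwise
distinct with minimal pairwise distance exactly `N^{−1}`. -/
theorem eta_perturbation (d n : ℕ) (hd : 2 ≤ d) (hn : 2 ≤ n) (N : ℕ) (hN : N = n ^ d)
    (η : EuclideanSpace ℝ (Fin d) → EuclideanSpace ℝ (Fin d))
    (hη : ∀ x : EuclideanSpace ℝ (Fin d), ∀ j : Fin d,
      η x j = if (j : ℕ) = d - 1
        then x j + ∑ k : Fin d, (if (k : ℕ) < d - 1
          then (n : ℝ) ^ (-((k : ℕ) : ℤ) - 1) * max 0 (x k) else 0)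
        else x j) :
    (Function.Bijective η ∧
      ∃ ηinv : EuclideanSpace ℝ (Fin d) → EuclideanSpace ℝ (Fin d),
        Function.LeftInverse ηinv η ∧ Function.RightInverse ηinv η ∧
        (∀ y : EuclideanSpace ℝ (Fin d), ∀ j : Fin d,
          ηinv y j = if (j : ℕ) = d - 1
            then y j - ∑ k : Fin d, (if (k : ℕ) < d - 1
              then (n : ℝ) ^ (-((k : ℕ) : ℤ) - 1) * max 0 (y k) else 0)
            else y j) ∧
        LipschitzWith (Real.toNNReal ((n : ℝ) / ((n : ℝ) - 1))) η ∧
        LipschitzWith (Real.toNNReal ((n : ℝ) / ((n : ℝ) - 1))) ηinv) ∧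
    ((Set.range fun α : Fin d → Fin n => η (gridPoint d n α) ⟨d - 1, by omega⟩) =
        {x : ℝ | ∃ i : ℕ, i < N ∧ x = (i : ℝ) / N} ∧
      (Function.Injective fun α : Fin d → Fin n => η (gridPoint d n α) ⟨d - 1, by omega⟩) ∧
      (∀ α β : Fin d → Fin n, α ≠ β →
        1 / (N : ℝ) ≤ |η (gridPoint d n α) ⟨d - 1, by omega⟩ -
          η (gridPoint d n β) ⟨d - 1, by omega⟩|) ∧
      ∃ α β : Fin d → Fin n, α ≠ β ∧
        |η (gridPoint d n α) ⟨d - 1, by omega⟩ -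
          η (gridPoint d n β) ⟨d - 1, by omega⟩| = 1 / (N : ℝ)) := by
  subst hN
  set last : Fin d := ⟨d - 1, by omega⟩
  set e : EuclideanSpace ℝ (Fin d) := EuclideanSpace.single last 1
  have hinv := couplingShift_add_smul_single n (j := last) rfl
  have hη_eq : η = fun x => x + couplingShift d n x • e := by
    funext x
    ext j
    rw [hη, ← couplingShift_eq]
    by_cases hj : (j : ℕ) = d - 1 <;> simp [e, last, hj, Fin.ext_iff]
  have hgrid (α : Fin d → Fin n) :
      η (gridPoint d n α) last = ((gridIndex d n α : ℕ) : ℝ) / ((n ^ d : ℕ) : ℝ) := by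
    rw [Nat.cast_pow, ← gridPoint_add_couplingShift n (j := last) rfl α, hη_eq]
    simp [e]
  have hK : LipschitzWith (∑ k, couplingWeight d n k) fun x => couplingShift d n x • e := by
    have hshift : LipschitzWith (∑ k, couplingWeight d n k) (couplingShift d n) :=
      lipschitzWith_sum_mul_relu _
    simpa [e] using hshift.smul_const e
  have hKn := one_add_sum_couplingWeight_le hn d
  have hN : 1 < n ^ d := Nat.one_lt_pow (by omega) (by omega)
  subst hη_eq
  refine ⟨⟨⟨(leftInverse_sub_smul_add_smul hinv).injective,
      (rightInverse_sub_smul_add_smul hinv).surjective⟩, fun y => y - couplingShift d n y • e,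
      leftInverse_sub_smul_add_smul hinv, rightInverse_sub_smul_add_smul hinv, fun y j => ?_,
      (LipschitzWith.id.add hK).weaken hKn,
      (LipschitzWith.id.sub hK).weaken hKn⟩, ?_⟩
  · rw [← couplingShift_eq]
    by_cases hj : (j : ℕ) = d - 1 <;> simp [e, last, hj, Fin.ext_iff]
  · simp only [hgrid]
    exact ⟨range_natCast_equiv_div _, injective_natCast_equiv_div _,
      fun α β => one_div_le_abs_natCast_equiv_div_sub _,
      exists_ne_abs_natCast_equiv_div_sub_eq _ hN⟩
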